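/- Let D₁ and D₂ be bounded proper subdomains of ℂ, and let f(z) = (az + b)/(cz + d) with a, b, c, d ∈ ℂ and ad − bc ≠ 0 be a Möbius transformation mapping D₁ onto D₂ (with the pole of f outside the closure of D₁). Then for all z₁, z₂ ∈ D₁, (1/4)·m_{D₁}(z₁, z₂) ≤ m_{D₂}(f(z₁), f(z₂)) ≤ 4·m_{D₁}(z₁, z₂). -/

import Mathlib

/-!
Since `2 δ_D(z) ≤ d(D)`, the `m`-density is comparable to the quasihyperbolic one:
`1 / δ_D ≤ m_D ≤ 2 / δ_D`. For a Möbius map with its pole off `D₁`, boundary points of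
`D₂ = f(D₁)` are images of boundary points of `D₁`, and the identity
`f ζ - f z = (ad - bc)(ζ - z) / ((cζ + d)(cz + d))` together with `|c| δ_{D₁}(z) ≤ |cz + d|`
(the pole lies outside the disc `B(z, δ_{D₁}(z)) ⊆ D₁`) gives
`δ_{D₂}(f z) ≥ |f'(z)| δ_{D₁}(z) / 2`. Hence `m_{D₂}(f z) |f'(z)| ≤ 4 m_{D₁}(z)`, so pushing a
path forward by `f` multiplies its `m`-length by at most `4`. The inverse of `f` is a Möbius map
of the same kind, which gives the other inequality.
-/

open Metric Set

variable {E : Type*} [NormedAddCommGroup E] [NormedSpace ℝ E]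

/-- δ_D(z): the Euclidean distance from `z` to the boundary `∂D`. -/
noncomputable def bdist (D : Set E) (z : E) : ℝ := Metric.infDist z (frontier D)

/-- The m-density `m_D(z) = d(D) / (δ_D(z)·(d(D) − δ_D(z)))`. -/
noncomputable def mDensity (D : Set E) (z : E) : ℝ :=
  Metric.diam D / (bdist D z * (Metric.diam D - bdist D z))

/-- A rectifiable path in `D` from `x` to `y`, modeled as a Lipschitz map on `[0,1]`. -/
def IsRectPathIn (D : Set E) (x y : E) (γ : ℝ → E) : Prop :=
  (∃ K : NNReal, LipschitzWith K γ) ∧ γ 0 = x ∧ γ 1 = y ∧ ∀ t ∈ Set.Icc (0:ℝ) 1, γ t ∈ D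

/-- The line integral `∫_γ ρ(z) |dz|` of a density `ρ` along a path `γ`. -/
noncomputable def pathIntegral (ρ : E → ℝ) (γ : ℝ → E) : ℝ :=
  ∫ t in (0:ℝ)..1, ρ (γ t) * ‖deriv γ t‖

/-- `inf_γ ∫_γ ρ(z)|dz|` over all rectifiable paths `γ` joining `x` and `y` in `D`. -/
noncomputable def pathDist (ρ : E → ℝ) (D : Set E) (x y : E) : ℝ :=
  sInf (pathIntegral ρ '' {γ | IsRectPathIn D x y γ})

/-- The metric `m_D`. -/
noncomputable def mDist (D : Set E) (x y : E) : ℝ := pathDist (mDensity D) D x y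

/-- The quasihyperbolic metric `k_D`. -/
noncomputable def kDist (D : Set E) (x y : E) : ℝ :=
  pathDist (fun z => 1 / bdist D z) D x y

open MeasureTheory

section Bdist

variable {D : Set E} {z : E}

lemma bdist_pos (hD : IsOpen D) (hproper : D ≠ univ) (hz : z ∈ D) : 0 < bdist D z := by
  have hfr : (frontier D).Nonempty := nonempty_frontier_iff.mpr ⟨⟨z, hz⟩, hproper⟩
  refine (isClosed_frontier.notMem_iff_infDist_pos hfr).mp fun hzfr => ?_
  rw [hD.frontier_eq] at hzfr
  exact hzfr.2 hz

lemma ball_bdist_subset (hD : IsOpen D) (hproper : D ≠ univ) (hz : z ∈ D) :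
    ball z (bdist D z) ⊆ D := by
  refine (convex_ball z _).isPreconnected.subset_of_closure_inter_subset hD
    ⟨z, mem_ball_self (bdist_pos hD hproper hz), hz⟩ fun w ⟨hwcl, hwball⟩ => ?_
  by_contra hwD
  exact disjoint_left.mp disjoint_ball_infDist hwball ⟨hwcl, by rwa [hD.interior_eq]⟩

variable [Nontrivial E]

lemma two_mul_bdist_le_diam (hD : IsOpen D) (hbdd : Bornology.IsBounded D)
    (hproper : D ≠ univ) (hz : z ∈ D) : 2 * bdist D z ≤ diam D := by
  rw [← diam_ball_eq z (bdist_pos hD hproper hz).le]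
  exact diam_mono (ball_bdist_subset hD hproper hz) hbdd

lemma inv_bdist_le_mDensity (hD : IsOpen D) (hbdd : Bornology.IsBounded D)
    (hproper : D ≠ univ) (hz : z ∈ D) : (bdist D z)⁻¹ ≤ mDensity D z := by
  have hδ := bdist_pos hD hproper hz
  have hdiam := two_mul_bdist_le_diam hD hbdd hproper hz
  rw [mDensity, inv_eq_one_div, div_le_div_iff₀ hδ (by nlinarith)]
  nlinarith

lemma mDensity_le_two_div_bdist (hD : IsOpen D) (hbdd : Bornology.IsBounded D)
    (hproper : D ≠ univ) (hz : z ∈ D) : mDensity D z ≤ 2 / bdist D z := by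
  have hδ := bdist_pos hD hproper hz
  have hdiam := two_mul_bdist_le_diam hD hbdd hproper hz
  rw [mDensity, div_le_div_iff₀ (by nlinarith) hδ]
  nlinarith

lemma mDensity_nonneg (hD : IsOpen D) (hbdd : Bornology.IsBounded D)
    (hproper : D ≠ univ) (hz : z ∈ D) : 0 ≤ mDensity D z :=
  (inv_nonneg.mpr (bdist_pos hD hproper hz).le).trans (inv_bdist_le_mDensity hD hbdd hproper hz)

lemma continuousOn_mDensity (hD : IsOpen D) (hbdd : Bornology.IsBounded D)
    (hproper : D ≠ univ) : ContinuousOn (mDensity D) D := by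
  have hδ : Continuous (bdist D) := continuous_infDist_pt _
  refine continuousOn_const.div (hδ.continuousOn.mul (continuousOn_const.sub hδ.continuousOn))
    fun z hz => ?_
  have := bdist_pos hD hproper hz
  have := two_mul_bdist_le_diam hD hbdd hproper hz
  nlinarith

lemma mDensity_mul_le_four_mul_mDensity {F : Type*} [NormedAddCommGroup F] [NormedSpace ℝ F]
    [Nontrivial F] {D' : Set F} {w : F} {k : ℝ}
    (hD : IsOpen D) (hbdd : Bornology.IsBounded D) (hproper : D ≠ univ) (hz : z ∈ D)
    (hD' : IsOpen D') (hbdd' : Bornology.IsBounded D') (hproper' : D' ≠ univ) (hw : w ∈ D')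
    (hk : 0 < k) (hδ : k * bdist D z ≤ 2 * bdist D' w) :
    mDensity D' w * k ≤ 4 * mDensity D z := by
  have hδz := bdist_pos hD hproper hz
  have hδw := bdist_pos hD' hproper' hw
  calc mDensity D' w * k ≤ 2 / bdist D' w * k :=
        mul_le_mul_of_nonneg_right (mDensity_le_two_div_bdist hD' hbdd' hproper' hw) hk.le
    _ ≤ 4 * (bdist D z)⁻¹ := by
        rw [div_mul_eq_mul_div, div_le_iff₀ hδw]
        field_simp
        linarith
    _ ≤ 4 * mDensity D z := by gcongr; exact inv_bdist_le_mDensity hD hbdd hproper hz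

end Bdist

section Topology

variable {X Y : Type*} [TopologicalSpace X] [TopologicalSpace Y] [T2Space Y] {f : X → Y}
  {s : Set X}

lemma closure_image_subset_image_closure (hs : IsCompact (closure s))
    (hf : ContinuousOn f (closure s)) : closure (f '' s) ⊆ f '' closure s :=
  closure_minimal (image_mono subset_closure) (hs.image_of_continuousOn hf).isClosed

lemma frontier_image_subset_image_frontier (hs : IsCompact (closure s))
    (hf : ContinuousOn f (closure s)) (hopen : IsOpen (f '' s)) :
    frontier (f '' s) ⊆ f '' frontier s := by
  intro w hw
  obtain ⟨ζ, hζ, rfl⟩ := closure_image_subset_image_closure hs hf (frontier_subset_closure hw)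
  refine ⟨ζ, ⟨hζ, fun hζs => ?_⟩, rfl⟩
  rw [hopen.frontier_eq] at hw
  exact hw.2 ⟨ζ, interior_subset hζs, rfl⟩

end Topology

lemma IsRectPathIn.comp_projIcc {V : Type*} [NormedAddCommGroup V] {D : Set V} {x y : V}
    {γ : ℝ → V} (hγ : IsRectPathIn D x y γ) :
    IsRectPathIn D x y fun t => γ (projIcc 0 1 zero_le_one t) := by
  obtain ⟨⟨K, hK⟩, h0, h1, hD⟩ := hγ
  refine ⟨⟨_, hK.comp ((LipschitzWith.subtype_val _).comp (LipschitzWith.projIcc _))⟩,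
    ?_, ?_, fun t _ => hD _ (projIcc _ _ _ t).2⟩
  · simpa only [projIcc_left] using h0
  · simpa only [projIcc_right] using h1

section Paths

variable {D : Set E} {x y : E} {γ : ℝ → E}

lemma pathIntegral_comp_projIcc (ρ : E → ℝ) (γ : ℝ → E) :
    pathIntegral ρ (fun t => γ (projIcc 0 1 zero_le_one t)) = pathIntegral ρ γ := by
  refine intervalIntegral.integral_congr_Ioo_of_le zero_le_one fun t ht => ?_
  have hγ : (fun s => γ (projIcc 0 1 zero_le_one s)) =ᶠ[nhds t] γ := by
    filter_upwards [Ioo_mem_nhds ht.1 ht.2] with s hs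
    rw [projIcc_of_mem _ (Ioo_subset_Icc_self hs)]
  simp only [hγ.deriv_eq, hγ.eq_of_nhds]

lemma IsRectPathIn.intervalIntegrable [CompleteSpace E] {ρ : E → ℝ}
    (hγ : IsRectPathIn D x y γ) (hρ : ContinuousOn ρ D) :
    IntervalIntegrable (fun t => ρ (γ t) * ‖deriv γ t‖) volume 0 1 := by
  obtain ⟨⟨K, hK⟩, -, -, hD⟩ := hγ
  have hderiv : IntervalIntegrable (fun t => ‖deriv γ t‖) volume 0 1 :=
    (intervalIntegrable_const (c := (K : ℝ))).mono_fun'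
      (stronglyMeasurable_deriv γ).aestronglyMeasurable.norm
      (ae_of_all _ fun t => by simpa using norm_deriv_le_of_lipschitz hK)
  exact hderiv.continuousOn_mul <| hρ.comp hK.continuous.continuousOn <| by
    rw [uIcc_of_le zero_le_one]; exact hD

lemma pathIntegral_nonneg {ρ : E → ℝ} (hγ : IsRectPathIn D x y γ) (hρ : ∀ z ∈ D, 0 ≤ ρ z) :
    0 ≤ pathIntegral ρ γ :=
  intervalIntegral.integral_nonneg zero_le_one fun t ht =>
    mul_nonneg (hρ _ (hγ.2.2.2 t ht)) (norm_nonneg _)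

lemma pathDist_le_mul {F : Type*} [NormedAddCommGroup F] [NormedSpace ℝ F] {D' : Set F}
    {x' y' : F} {ρ : E → ℝ} {ρ' : F → ℝ} {C : ℝ} (hC : 0 < C) (hρ' : ∀ z ∈ D', 0 ≤ ρ' z)
    (hback : ∀ γ', IsRectPathIn D' x' y' γ' → ∃ γ, IsRectPathIn D x y γ)
    (hforth : ∀ γ, IsRectPathIn D x y γ →
      ∃ γ', IsRectPathIn D' x' y' γ' ∧ pathIntegral ρ' γ' ≤ C * pathIntegral ρ γ) :
    pathDist ρ' D' x' y' ≤ C * pathDist ρ D x y := by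
  -- With no path in `D`, `hback` leaves none in `D'` either: both sides are `sInf ∅ = 0`.
  by_cases hpath : ∃ γ, IsRectPathIn D x y γ
  · obtain ⟨γ₀, hγ₀⟩ := hpath
    have hbdd : BddBelow (pathIntegral ρ' '' {γ' | IsRectPathIn D' x' y' γ'}) :=
      ⟨0, forall_mem_image.2 fun _ hγ' => pathIntegral_nonneg hγ' hρ'⟩
    rw [← div_le_iff₀' hC]
    refine le_csInf ⟨_, mem_image_of_mem _ hγ₀⟩ (forall_mem_image.2 fun γ hγ => ?_)
    obtain ⟨γ', hγ', hle⟩ := hforth γ hγ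
    rw [div_le_iff₀' hC]
    exact (csInf_le hbdd (mem_image_of_mem _ hγ')).trans hle
  · have hD : {γ | IsRectPathIn D x y γ} = ∅ :=
      eq_empty_of_forall_notMem fun γ hγ => hpath ⟨γ, hγ⟩
    have hD' : {γ' | IsRectPathIn D' x' y' γ'} = ∅ :=
      eq_empty_of_forall_notMem fun γ' hγ' => hpath (hback γ' hγ')
    simp [pathDist, hD, hD']

end Paths

lemma exists_pathIntegral_comp_le {D₁ D₂ : Set ℂ} {ρ₁ ρ₂ : ℂ → ℝ} {f f' : ℂ → ℂ} {L : NNReal}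
    {C : ℝ} (hρ₁ : ContinuousOn ρ₁ D₁) (hρ₂ : ContinuousOn ρ₂ D₂)
    (hf : ∀ z ∈ D₁, HasDerivAt f (f' z) z) (hfL : LipschitzOnWith L f D₁)
    (hmaps : MapsTo f D₁ D₂) (hρ : ∀ z ∈ D₁, ρ₂ (f z) * ‖f' z‖ ≤ C * ρ₁ z)
    {x y : ℂ} {γ : ℝ → ℂ} (hγ : IsRectPathIn D₁ x y γ) :
    ∃ γ', IsRectPathIn D₂ (f x) (f y) γ' ∧ pathIntegral ρ₂ γ' ≤ C * pathIntegral ρ₁ γ := by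
  -- Clamping to `[0, 1]` keeps the whole path inside `D₁`, where `f` is Lipschitz.
  set γ₀ := fun t : ℝ => γ (projIcc 0 1 zero_le_one t)
  have hγ₀ : IsRectPathIn D₁ x y γ₀ := hγ.comp_projIcc
  have hmem : ∀ t, γ₀ t ∈ D₁ := fun t => hγ.2.2.2 _ (projIcc (0 : ℝ) 1 _ t).2
  obtain ⟨⟨K, hK⟩, h0, h1, -⟩ := hγ₀
  have hγ' : IsRectPathIn D₂ (f x) (f y) (f ∘ γ₀) :=
    ⟨⟨L * K, lipschitzOnWith_univ.mp (hfL.comp hK.lipschitzOnWith fun t _ => hmem t)⟩,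
      by simp [h0], by simp [h1], fun t _ => hmaps (hmem t)⟩
  refine ⟨f ∘ γ₀, hγ', ?_⟩
  rw [← pathIntegral_comp_projIcc ρ₁ γ, pathIntegral, pathIntegral,
    ← intervalIntegral.integral_const_mul]
  refine intervalIntegral.integral_mono_ae zero_le_one (hγ'.intervalIntegrable hρ₂)
    ((hγ.comp_projIcc.intervalIntegrable hρ₁).const_mul C) ?_
  filter_upwards [hK.ae_differentiableAt_real] with t ht
  rw [((hf _ (hmem t)).scomp t ht.hasDerivAt).deriv, norm_smul]
  calc ρ₂ ((f ∘ γ₀) t) * (‖deriv γ₀ t‖ * ‖f' (γ₀ t)‖)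
      = ρ₂ (f (γ₀ t)) * ‖f' (γ₀ t)‖ * ‖deriv γ₀ t‖ := by simp only [Function.comp]; ring
    _ ≤ C * ρ₁ (γ₀ t) * ‖deriv γ₀ t‖ :=
        mul_le_mul_of_nonneg_right (hρ _ (hmem t)) (norm_nonneg _)
    _ = C * (ρ₁ (γ₀ t) * ‖deriv γ₀ t‖) := by ring

section Moebius

variable {a b c d : ℂ} {f : ℂ → ℂ} {D₁ D₂ : Set ℂ}

lemma moebius_sub (hf : ∀ z, f z = (a * z + b) / (c * z + d)) {z w : ℂ}
    (hz : c * z + d ≠ 0) (hw : c * w + d ≠ 0) :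
    f w - f z = (a * d - b * c) * (w - z) / ((c * w + d) * (c * z + d)) := by
  rw [hf, hf, div_sub_div _ _ hw hz]
  ring

lemma dist_moebius (hf : ∀ z, f z = (a * z + b) / (c * z + d)) {z w : ℂ}
    (hz : c * z + d ≠ 0) (hw : c * w + d ≠ 0) :
    dist (f w) (f z) = ‖a * d - b * c‖ * dist w z / (‖c * w + d‖ * ‖c * z + d‖) := by
  rw [dist_eq_norm, moebius_sub hf hz hw, norm_div, norm_mul, norm_mul, dist_eq_norm]

lemma hasDerivAt_moebius (hf : ∀ z, f z = (a * z + b) / (c * z + d)) {z : ℂ}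
    (hz : c * z + d ≠ 0) : HasDerivAt f ((a * d - b * c) / (c * z + d) ^ 2) z := by
  have hnum : HasDerivAt (fun w => a * w + b) a z := by
    simpa using ((hasDerivAt_id z).const_mul a).add_const b
  have hden : HasDerivAt (fun w => c * w + d) c z := by
    simpa using ((hasDerivAt_id z).const_mul c).add_const d
  have h := hnum.div hden hz
  rw [show ((fun w => a * w + b) / fun w => c * w + d) = f from funext fun w => (hf w).symm] at h
  exact h.congr_deriv (by ring)

lemma continuousOn_moebius (hf : ∀ z, f z = (a * z + b) / (c * z + d)) {s : Set ℂ}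
    (hpole : ∀ z ∈ s, c * z + d ≠ 0) : ContinuousOn f s := fun z hz =>
  (hasDerivAt_moebius hf (hpole z hz)).continuousAt.continuousWithinAt

lemma moebius_inverse (hf : ∀ z, f z = (a * z + b) / (c * z + d)) (habcd : a * d - b * c ≠ 0)
    {z : ℂ} (hz : c * z + d ≠ 0) :
    -c * f z + a ≠ 0 ∧ (d * f z + -b) / (-c * f z + a) = z := by
  have hden : -c * f z + a = (a * d - b * c) / (c * z + d) := by
    rw [hf, eq_div_iff hz, add_mul, mul_assoc, div_mul_cancel₀ _ hz]; ring
  have hnum : d * f z + -b = (a * d - b * c) * z / (c * z + d) := by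
    rw [hf, eq_div_iff hz, add_mul, mul_assoc, div_mul_cancel₀ _ hz]; ring
  refine ⟨hden ▸ div_ne_zero habcd hz, ?_⟩
  rw [hden, hnum]
  field_simp

lemma norm_mul_bdist_le {D : Set ℂ} (hD : IsOpen D) (hproper : D ≠ univ)
    (hpole : ∀ w ∈ D, c * w + d ≠ 0) {z : ℂ} (hz : z ∈ D) :
    ‖c‖ * bdist D z ≤ ‖c * z + d‖ := by
  rcases eq_or_ne c 0 with rfl | hc
  · simp
  by_contra! hlt
  have hmem : -d / c ∈ ball z (bdist D z) := by
    rw [mem_ball, dist_eq_norm, ← mul_lt_mul_iff_right₀ (norm_pos_iff.mpr hc), ← norm_mul,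
      ← norm_neg, show -(c * (-d / c - z)) = c * z + d by field_simp; ring]
    exact hlt
  exact hpole _ (ball_bdist_subset hD hproper hz hmem) (by field_simp; ring)

lemma le_dist_moebius (hf : ∀ z, f z = (a * z + b) / (c * z + d)) {z ζ : ℂ} {r : ℝ}
    (hz : c * z + d ≠ 0) (hζ : c * ζ + d ≠ 0) (hr : 0 ≤ r) (hrζ : r ≤ dist ζ z)
    (hcr : ‖c‖ * r ≤ ‖c * z + d‖) :
    ‖a * d - b * c‖ / ‖c * z + d‖ ^ 2 * r ≤ 2 * dist (f ζ) (f z) := by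
  have hB : 0 < ‖c * z + d‖ := norm_pos_iff.mpr hz
  have hBζ : 0 < ‖c * ζ + d‖ := norm_pos_iff.mpr hζ
  have hζB : ‖c * ζ + d‖ ≤ ‖c‖ * dist ζ z + ‖c * z + d‖ := by
    rw [dist_eq_norm, ← norm_mul, show c * ζ + d = c * (ζ - z) + (c * z + d) by ring]
    exact norm_add_le _ _
  have hkey : r * ‖c * ζ + d‖ ≤ 2 * dist ζ z * ‖c * z + d‖ := by
    nlinarith [mul_le_mul_of_nonneg_left hζB hr,
      mul_le_mul_of_nonneg_right hcr (dist_nonneg : 0 ≤ dist ζ z),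
      mul_le_mul_of_nonneg_right hrζ hB.le]
  rw [dist_moebius hf hz hζ, div_mul_eq_mul_div, div_le_iff₀ (by positivity),
    show 2 * (‖a * d - b * c‖ * dist ζ z / (‖c * ζ + d‖ * ‖c * z + d‖)) * ‖c * z + d‖ ^ 2
      = ‖a * d - b * c‖ * (2 * dist ζ z * ‖c * z + d‖) / ‖c * ζ + d‖ by field_simp,
    le_div_iff₀ hBζ, mul_assoc]
  exact mul_le_mul_of_nonneg_left hkey (norm_nonneg _)

lemma mul_bdist_le_two_mul_bdist_moebius (hf : ∀ z, f z = (a * z + b) / (c * z + d))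
    (hpole : ∀ z ∈ closure D₁, c * z + d ≠ 0) (hD₁ : IsOpen D₁)
    (hD₁bdd : Bornology.IsBounded D₁) (hD₁proper : D₁ ≠ univ) (hD₂ : IsOpen D₂)
    (hD₂proper : D₂ ≠ univ) (hmaps : f '' D₁ = D₂) {z : ℂ} (hz : z ∈ D₁) :
    ‖a * d - b * c‖ / ‖c * z + d‖ ^ 2 * bdist D₁ z ≤ 2 * bdist D₂ (f z) := by
  subst hmaps
  have hfr : (frontier (f '' D₁)).Nonempty :=
    nonempty_frontier_iff.mpr ⟨⟨f z, mem_image_of_mem f hz⟩, hD₂proper⟩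
  rw [← div_le_iff₀' two_pos, bdist, bdist, le_infDist hfr]
  intro w hw
  obtain ⟨ζ, hζ, rfl⟩ := frontier_image_subset_image_frontier hD₁bdd.isCompact_closure
    (continuousOn_moebius hf hpole) hD₂ hw
  rw [div_le_iff₀' two_pos, dist_comm]
  exact le_dist_moebius hf (hpole z (subset_closure hz)) (hpole ζ (frontier_subset_closure hζ))
    infDist_nonneg ((infDist_le_dist_of_mem hζ).trans_eq (dist_comm _ _))
    (norm_mul_bdist_le hD₁ hD₁proper (fun w hw => hpole w (subset_closure hw)) hz)

lemma mDensity_moebius_mul_norm_deriv_le (hf : ∀ z, f z = (a * z + b) / (c * z + d))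
    (habcd : a * d - b * c ≠ 0) (hpole : ∀ z ∈ closure D₁, c * z + d ≠ 0) (hD₁ : IsOpen D₁)
    (hD₁bdd : Bornology.IsBounded D₁) (hD₁proper : D₁ ≠ univ) (hD₂ : IsOpen D₂)
    (hD₂bdd : Bornology.IsBounded D₂) (hD₂proper : D₂ ≠ univ) (hmaps : f '' D₁ = D₂)
    {z : ℂ} (hz : z ∈ D₁) :
    mDensity D₂ (f z) * ‖(a * d - b * c) / (c * z + d) ^ 2‖ ≤ 4 * mDensity D₁ z := by
  have hzpole := hpole z (subset_closure hz)
  rw [norm_div, norm_pow]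
  exact mDensity_mul_le_four_mul_mDensity hD₁ hD₁bdd hD₁proper hz hD₂ hD₂bdd hD₂proper
    (hmaps ▸ mem_image_of_mem f hz) (by positivity)
    (mul_bdist_le_two_mul_bdist_moebius hf hpole hD₁ hD₁bdd hD₁proper hD₂ hD₂proper hmaps hz)

lemma exists_lipschitzOnWith_moebius (hf : ∀ z, f z = (a * z + b) / (c * z + d)) {K : Set ℂ}
    (hK : IsCompact K) (hpole : ∀ z ∈ K, c * z + d ≠ 0) : ∃ L, LipschitzOnWith L f K := by
  rcases K.eq_empty_or_nonempty with rfl | hne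
  · exact ⟨0, lipschitzOnWith_empty _ _⟩
  obtain ⟨z₀, hz₀, hmin⟩ :=
    hK.exists_isMinOn hne (by fun_prop : Continuous fun z => ‖c * z + d‖).continuousOn
  have hβ : 0 < ‖c * z₀ + d‖ := norm_pos_iff.mpr (hpole z₀ hz₀)
  refine ⟨_, LipschitzOnWith.of_dist_le' (K := ‖a * d - b * c‖ / ‖c * z₀ + d‖ ^ 2)
    fun w hw z hz => ?_⟩
  rw [dist_moebius hf (hpole z hz) (hpole w hw), div_mul_eq_mul_div, mul_comm _ (dist w z)]
  gcongr
  rw [sq]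
  exact mul_le_mul (hmin hw) (hmin hz) hβ.le (norm_nonneg _)

lemma exists_pathIntegral_moebius_le (hf : ∀ z, f z = (a * z + b) / (c * z + d))
    (habcd : a * d - b * c ≠ 0) (hpole : ∀ z ∈ closure D₁, c * z + d ≠ 0) (hD₁ : IsOpen D₁)
    (hD₁bdd : Bornology.IsBounded D₁) (hD₁proper : D₁ ≠ univ) (hD₂ : IsOpen D₂)
    (hD₂bdd : Bornology.IsBounded D₂) (hD₂proper : D₂ ≠ univ) (hmaps : f '' D₁ = D₂)
    {x y : ℂ} {γ : ℝ → ℂ} (hγ : IsRectPathIn D₁ x y γ) :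
    ∃ γ', IsRectPathIn D₂ (f x) (f y) γ' ∧
      pathIntegral (mDensity D₂) γ' ≤ 4 * pathIntegral (mDensity D₁) γ := by
  obtain ⟨L, hL⟩ := exists_lipschitzOnWith_moebius hf hD₁bdd.isCompact_closure hpole
  exact exists_pathIntegral_comp_le (continuousOn_mDensity hD₁ hD₁bdd hD₁proper)
    (continuousOn_mDensity hD₂ hD₂bdd hD₂proper)
    (fun z hz => hasDerivAt_moebius hf (hpole z (subset_closure hz))) (hL.mono subset_closure)
    (hmaps ▸ mapsTo_image f D₁)
    (fun z hz => mDensity_moebius_mul_norm_deriv_le hf habcd hpole hD₁ hD₁bdd hD₁proper hD₂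
      hD₂bdd hD₂proper hmaps hz) hγ


lemma exists_pathIntegral_moebius_symm_le (hf : ∀ z, f z = (a * z + b) / (c * z + d))
    (habcd : a * d - b * c ≠ 0) (hpole : ∀ z ∈ closure D₁, c * z + d ≠ 0) (hD₁ : IsOpen D₁)
    (hD₁bdd : Bornology.IsBounded D₁) (hD₁proper : D₁ ≠ univ) (hD₂ : IsOpen D₂)
    (hD₂bdd : Bornology.IsBounded D₂) (hD₂proper : D₂ ≠ univ) (hmaps : f '' D₁ = D₂)
    {x y : ℂ} (hx : x ∈ D₁) (hy : y ∈ D₁) {γ : ℝ → ℂ} (hγ : IsRectPathIn D₂ (f x) (f y) γ) :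
    ∃ γ', IsRectPathIn D₁ x y γ' ∧
      pathIntegral (mDensity D₁) γ' ≤ 4 * pathIntegral (mDensity D₂) γ := by
  obtain ⟨g, hg⟩ : ∃ g : ℂ → ℂ, ∀ w, g w = (d * w + -b) / (-c * w + a) := ⟨_, fun _ => rfl⟩
  have hgf : ∀ z ∈ D₁, g (f z) = z := fun z hz =>
    (hg _).trans (moebius_inverse hf habcd (hpole z (subset_closure hz))).2
  have hgpole : ∀ w ∈ closure D₂, -c * w + a ≠ 0 := by
    intro w hw
    obtain ⟨z, hz, rfl⟩ := closure_image_subset_image_closure hD₁bdd.isCompact_closure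
      (continuousOn_moebius hf hpole) (hmaps ▸ hw)
    exact (moebius_inverse hf habcd (hpole z hz)).1
  have hgmaps : g '' D₂ = D₁ := by
    rw [← hmaps, image_image, image_congr hgf, image_id']
  obtain ⟨γ', hγ', hle⟩ := exists_pathIntegral_moebius_le hg
    (fun h => habcd (by linear_combination h)) hgpole hD₂ hD₂bdd hD₂proper hD₁ hD₁bdd hD₁proper
    hgmaps hγ
  rw [hgf x hx, hgf y hy] at hγ'
  exact ⟨γ', hγ', hle⟩

end Moebius

theorem mDist_moebius_general (D₁ D₂ : Set ℂ)
    (hD₁open : IsOpen D₁)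
    (hD₁bdd : Bornology.IsBounded D₁) (hD₁proper : D₁ ≠ Set.univ)
    (hD₂open : IsOpen D₂)
    (hD₂bdd : Bornology.IsBounded D₂) (hD₂proper : D₂ ≠ Set.univ)
    (a b c d : ℂ) (habcd : a * d - b * c ≠ 0)
    (f : ℂ → ℂ) (hf : ∀ z : ℂ, f z = (a * z + b) / (c * z + d))
    (hpole : ∀ z ∈ closure D₁, c * z + d ≠ 0)
    (hmaps : f '' D₁ = D₂)
    (z₁ z₂ : ℂ) (hz₁ : z₁ ∈ D₁) (hz₂ : z₂ ∈ D₁) :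
    (1 / 4) * mDist D₁ z₁ z₂ ≤ mDist D₂ (f z₁) (f z₂) ∧
      mDist D₂ (f z₁) (f z₂) ≤ 4 * mDist D₁ z₁ z₂ := by
  have hforth := fun γ (hγ : IsRectPathIn D₁ z₁ z₂ γ) => exists_pathIntegral_moebius_le hf habcd
    hpole hD₁open hD₁bdd hD₁proper hD₂open hD₂bdd hD₂proper hmaps hγ
  have hback := fun γ (hγ : IsRectPathIn D₂ (f z₁) (f z₂) γ) =>
    exists_pathIntegral_moebius_symm_le hf habcd hpole hD₁open hD₁bdd hD₁proper hD₂open hD₂bdd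
      hD₂proper hmaps hz₁ hz₂ hγ
  have hlower : mDist D₁ z₁ z₂ ≤ 4 * mDist D₂ (f z₁) (f z₂) :=
    pathDist_le_mul four_pos (fun z hz => mDensity_nonneg hD₁open hD₁bdd hD₁proper hz)
      (fun γ hγ => (hforth γ hγ).imp fun _ h => h.1) hback
  have hupper : mDist D₂ (f z₁) (f z₂) ≤ 4 * mDist D₁ z₁ z₂ :=
    pathDist_le_mul four_pos (fun z hz => mDensity_nonneg hD₂open hD₂bdd hD₂proper hz)
      (fun γ hγ => (hback γ hγ).imp fun _ h => h.1) hforth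
  exact ⟨by linarith, hupper⟩

/-- Proposition: Möbius quasi-invariance of the $m_D$-metric.
If $f(z) = (az+b)/(cz+d)$, $ad − bc ≠ 0$, maps a bounded proper subdomain
$D_1 ⊂ ℂ$ onto $D_2$ (pole outside the closure of $D_1$), then
$(1/4) m_{D_1}(z_1,z_2) ≤ m_{D_2}(f(z_1),f(z_2)) ≤ 4 m_{D_1}(z_1,z_2)$
for all $z_1, z_2 ∈ D_1$. -/
theorem mDist_moebius (D₁ D₂ : Set ℂ)
    (hD₁open : IsOpen D₁) (hD₁conn : IsConnected D₁)
    (hD₁bdd : Bornology.IsBounded D₁) (hD₁proper : D₁ ≠ Set.univ)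
    (hD₂open : IsOpen D₂) (hD₂conn : IsConnected D₂)
    (hD₂bdd : Bornology.IsBounded D₂) (hD₂proper : D₂ ≠ Set.univ)
    (a b c d : ℂ) (habcd : a * d - b * c ≠ 0)
    (f : ℂ → ℂ) (hf : ∀ z : ℂ, f z = (a * z + b) / (c * z + d))
    (hpole : ∀ z ∈ closure D₁, c * z + d ≠ 0)
    (hmaps : f '' D₁ = D₂)
    (z₁ z₂ : ℂ) (hz₁ : z₁ ∈ D₁) (hz₂ : z₂ ∈ D₁) :
    (1 / 4) * mDist D₁ z₁ z₂ ≤ mDist D₂ (f z₁) (f z₂) ∧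
      mDist D₂ (f z₁) (f z₂) ≤ 4 * mDist D₁ z₁ z₂ :=
  mDist_moebius_general D₁ D₂ hD₁open hD₁bdd hD₁proper hD₂open hD₂bdd hD₂proper a b c d habcd f hf
    hpole hmaps z₁ z₂ hz₁ hz₂
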